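/- Let P be the Petersen graph and F a field of characteristic 0. Then there are exactly fifteen one-dimensional subspaces ⟨u⟩ of the space of functions V(P) → F such that the support of u² has exactly 3 edges; namely, the spans of the indicator functions of the ten vertices are ten of them, and there are exactly five further such spans. -/

import Mathlib

/-- `edgeVal u e` is the sum of the values of `u` at the two endpoints of `e`,
written `λ_e(u)` in the paper. -/
def edgeVal {V F : Type*} [Field F] (u : V → F) : Sym2 V → F :=
  Sym2.lift ⟨fun x y => u x + u y, fun _ _ => add_comm _ _⟩

/-- The vertices of the Petersen graph: 2-element subsets of a 5-element set. -/
abbrev PetersenVertex : Type := {s : Finset (Fin 5) // s.card = 2}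

/-- The Petersen graph: two vertices are adjacent iff they are disjoint pairs. -/
def Petersen : SimpleGraph PetersenVertex where
  Adj a b := Disjoint a.1 b.1
  symm := ⟨fun _ _ h => h.symm⟩
  loopless := ⟨by
    intro a h
    have h' : a.1 = ∅ := disjoint_self.mp h
    have h2 := a.2
    rw [h'] at h2
    simp at h2⟩

instance : DecidableRel Petersen.Adj := fun a b =>
  inferInstanceAs (Decidable (Disjoint a.1 b.1))

/-!
Let `T` be the set of edges on which `λ(u)` does not vanish. An edge `xy` with
`u x ^ 2 ≠ u y ^ 2` lies in `T`, so every level set of `u²` is a vertex set with at most three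
boundary edges. In the Petersen graph such a set has at most one or at least nine vertices, and `T`
is not the whole edge set; hence `u²` is constant, or constant off a single vertex `v`.

In the second case `T` is the star of `v`. Were `u²` a nonzero constant `a²` off `v`, every edge of
`P - v` would join a vertex where `u = a` to one where `u = -a`, making `P - v` bipartite; so `u` is
a multiple of the indicator of `v`. In the first case `u = ±a` with `a ≠ 0`, and `T` is the set of
edges not crossing the cut between `{u = a}` and `{u = -a}`. The only cuts of `P` leaving at most
three edges uncrossed separate the four pairs containing some `i` from the six others, which makes
`u` a multiple of the sign vector of `i`. The fifteen spans so obtained are distinct because their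
edge supports are.
-/

open Finset

lemma eq_ite_neg_of_sq_eq_sq {R : Type*} [CommRing R] [NoZeroDivisors R] [DecidableEq R] {b a : R}
    (h : b ^ 2 = a ^ 2) : b = if b = a then a else -a := by
  split_ifs with hb
  · exact hb
  · exact (sq_eq_sq_iff_eq_or_eq_neg.mp h).resolve_left hb

section EdgeSupport

variable {V F : Type*} [Field F] (G : SimpleGraph V)

def edgeSupport (u : V → F) : Set (Sym2 V) :=
  {e | e ∈ G.edgeSet ∧ edgeVal u e ≠ 0}

@[simp]
lemma edgeVal_mk (u : V → F) (x y : V) : edgeVal u s(x, y) = u x + u y := rfl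

lemma edgeVal_smul (c : F) (u : V → F) (e : Sym2 V) : edgeVal (c • u) e = c * edgeVal u e := by
  induction e using Sym2.ind with
  | _ x y => simp [mul_add]

lemma edgeSupport_smul {c : F} (hc : c ≠ 0) (u : V → F) :
    edgeSupport G (c • u) = edgeSupport G u := by
  ext e
  simp [edgeSupport, edgeVal_smul, hc]

lemma edgeSupport_zero : edgeSupport G (0 : V → F) = ∅ := by
  ext e
  induction e using Sym2.ind with
  | _ x y => simp [edgeSupport]

lemma edgeSupport_eq_of_span_eq {u w : V → F}
    (h : Submodule.span F {u} = Submodule.span F {w}) : edgeSupport G u = edgeSupport G w := by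
  obtain ⟨c, rfl⟩ := Submodule.span_singleton_eq_span_singleton.mp h
  exact (edgeSupport_smul G c.ne_zero u).symm

lemma edgeSupport_eq_edgeSet {u : V → F} (hu : Function.Injective fun x => u x ^ 2) :
    edgeSupport G u = G.edgeSet := by
  refine Set.sep_eq_self_iff_mem_true.mpr fun e he => ?_
  induction e using Sym2.ind with
  | _ x y =>
    intro hxy
    refine (G.mem_edgeSet.mp he).ne (hu ?_)
    simp [eq_neg_of_add_eq_zero_left hxy]

end EdgeSupport

namespace SimpleGraph

variable {V : Type*} [Fintype V] [DecidableEq V] (G : SimpleGraph V) [DecidableRel G.Adj]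

def edgeBoundary (S : Finset V) : Finset (Sym2 V) :=
  G.edgeFinset.filter fun e => ¬ (e.map fun x => decide (x ∈ S)).IsDiag

variable {G}

lemma mk_mem_edgeBoundary {S : Finset V} {x y : V} :
    s(x, y) ∈ G.edgeBoundary S ↔ G.Adj x y ∧ (x ∈ S ↔ y ∉ S) := by
  simp only [edgeBoundary, mem_filter, mem_edgeFinset, mem_edgeSet, Sym2.map_mk,
    Sym2.mk_isDiag_iff, decide_eq_decide]
  tauto

lemma edgeBoundary_compl (S : Finset V) : G.edgeBoundary Sᶜ = G.edgeBoundary S := by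
  ext e
  induction e using Sym2.ind with
  | _ x y => simp only [mk_mem_edgeBoundary, mem_compl]; tauto

variable {F : Type*} [Field F]

lemma edgeBoundary_subset_edgeSupport {u : V → F} {S : Finset V}
    (h : ∀ x ∈ S, ∀ y ∉ S, G.Adj x y → u x + u y ≠ 0) :
    ↑(G.edgeBoundary S) ⊆ edgeSupport G u := by
  intro e he
  induction e using Sym2.ind with
  | _ x y =>
    obtain ⟨hxy, hS⟩ := mk_mem_edgeBoundary.mp he
    refine ⟨hxy, ?_⟩
    by_cases hx : x ∈ S
    · exact h x hx y (hS.mp hx) hxy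
    · rw [edgeVal_mk, add_comm]
      exact h y (not_not.mp (mt hS.mpr hx)) x hx hxy.symm

lemma edgeBoundary_filter_sq_eq_subset_edgeSupport [DecidableEq F] (u : V → F) (a : F) :
    ↑(G.edgeBoundary (univ.filter fun x => u x ^ 2 = a)) ⊆ edgeSupport G u :=
  edgeBoundary_subset_edgeSupport fun x hx y hy _ hxy => by
    simp only [mem_filter, mem_univ, true_and] at hx hy
    exact hy (by rw [eq_neg_of_add_eq_zero_right hxy, neg_sq, hx])

lemma edgeSupport_indicator (v : V) :
    edgeSupport G (fun x => if x = v then (1 : F) else 0) = ↑(G.edgeBoundary {v}) := by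
  ext e
  induction e using Sym2.ind with
  | _ x y =>
    simp only [edgeSupport, Set.mem_ofPred_eq, mem_edgeSet, edgeVal_mk, mem_coe,
      mk_mem_edgeBoundary, mem_singleton]
    refine and_congr_right fun hxy => ?_
    obtain rfl | hx := eq_or_ne x v
    · simp [hxy.ne.symm]
    · simp [hx]

lemma edgeSupport_sign [NeZero (2 : F)] {c : F} (hc : c ≠ 0) (A : Finset V) :
    edgeSupport G (fun x => if x ∈ A then c else -c) = ↑(G.edgeFinset \ G.edgeBoundary A) := by
  ext e
  induction e using Sym2.ind with
  | _ x y =>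
    simp only [edgeSupport, Set.mem_ofPred_eq, mem_edgeSet, edgeVal_mk, coe_sdiff, Set.mem_sdiff,
      coe_edgeFinset, mem_coe, mk_mem_edgeBoundary]
    refine and_congr_right fun hxy => ?_
    by_cases hx : x ∈ A <;> by_cases hy : y ∈ A <;> simp [hx, hy, hxy, hc, two_ne_zero, ← two_mul]

end SimpleGraph

namespace Petersen

def pairsContaining (i : Fin 5) : Finset PetersenVertex := univ.filter fun x => i ∈ x.1

lemma natCard_vertex : Nat.card PetersenVertex = 10 := by
  rw [Nat.card_eq_fintype_card]
  decide

lemma card_edgeFinset : #Petersen.edgeFinset = 15 := by decide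

lemma card_edgeBoundary_singleton : ∀ v, #(Petersen.edgeBoundary {v}) = 3 := by decide

theorem card_le_one_or_nine_le_of_card_edgeBoundary_le_three :
    ∀ S : Finset PetersenVertex, #(Petersen.edgeBoundary S) ≤ 3 → #S ≤ 1 ∨ 9 ≤ #S := by
  decide +kernel

theorem exists_eq_pairsContaining_of_card_sdiff_edgeBoundary_le_three :
    ∀ A, #(Petersen.edgeFinset \ Petersen.edgeBoundary A) ≤ 3 →
      ∃ i, A = pairsContaining i ∨ A = (pairsContaining i)ᶜ := by
  decide +kernel

lemma card_sdiff_edgeBoundary_pairsContaining :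
    ∀ i, #(Petersen.edgeFinset \ Petersen.edgeBoundary (pairsContaining i)) = 3 := by
  decide

lemma not_sdiff_edgeBoundary_pairsContaining_subset_edgeBoundary_singleton :
    ∀ i v, ¬ Petersen.edgeFinset \ Petersen.edgeBoundary (pairsContaining i) ⊆
      Petersen.edgeBoundary {v} := by
  decide

/-- `P - v` is not bipartite. -/
lemma not_sdiff_edgeBoundary_subset_edgeBoundary_singleton (A : Finset PetersenVertex)
    (v : PetersenVertex) :
    ¬ Petersen.edgeFinset \ Petersen.edgeBoundary A ⊆ Petersen.edgeBoundary {v} := by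
  intro h
  have hsmall := (card_le_card h).trans (card_edgeBoundary_singleton v).le
  obtain ⟨i, rfl | rfl⟩ := exists_eq_pairsContaining_of_card_sdiff_edgeBoundary_le_three A hsmall
  · exact not_sdiff_edgeBoundary_pairsContaining_subset_edgeBoundary_singleton i v h
  · rw [SimpleGraph.edgeBoundary_compl] at h
    exact not_sdiff_edgeBoundary_pairsContaining_subset_edgeBoundary_singleton i v h

def weightThreeSupport : PetersenVertex ⊕ Fin 5 → Finset (Sym2 PetersenVertex) :=
  Sum.elim (fun v => Petersen.edgeBoundary {v})
    fun i => Petersen.edgeFinset \ Petersen.edgeBoundary (pairsContaining i)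

lemma weightThreeSupport_injective : Function.Injective weightThreeSupport := by
  decide

variable {F : Type*} [Field F]

def signVector (i : Fin 5) : PetersenVertex → F :=
  fun x => if x ∈ pairsContaining i then 1 else -1

def weightThreeVector : PetersenVertex ⊕ Fin 5 → PetersenVertex → F :=
  Sum.elim (fun v x => if x = v then 1 else 0) signVector

lemma card_filter_sq_eq_le_one_or_nine_le [DecidableEq F] {u : PetersenVertex → F}
    (hu : (edgeSupport Petersen u).ncard = 3) (a : F) :
    #(univ.filter fun x => u x ^ 2 = a) ≤ 1 ∨ 9 ≤ #(univ.filter fun x => u x ^ 2 = a) := by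
  apply card_le_one_or_nine_le_of_card_edgeBoundary_le_three
  rw [← hu, ← Set.ncard_coe_finset]
  exact Set.ncard_le_ncard (SimpleGraph.edgeBoundary_filter_sq_eq_subset_edgeSupport u a)

variable [NeZero (2 : F)]

lemma exists_eq_smul_signVector {u : PetersenVertex → F} {a : F} (hsq : ∀ x, u x ^ 2 = a ^ 2)
    (hu : (edgeSupport Petersen u).ncard = 3) : ∃ i, ∃ c : F, u = c • signVector i := by
  classical
  have ha : a ≠ 0 := by
    rintro rfl
    have hzero : u = 0 := funext fun x => by simpa using hsq x
    simp [hzero, edgeSupport_zero] at hu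
  set A := univ.filter fun x => u x = a
  have hu_eq : u = fun x => if x ∈ A then a else -a :=
    funext fun x => by simpa [A] using eq_ite_neg_of_sq_eq_sq (hsq x)
  rw [hu_eq, SimpleGraph.edgeSupport_sign ha, Set.ncard_coe_finset] at hu
  obtain ⟨i, hA | hA⟩ := exists_eq_pairsContaining_of_card_sdiff_edgeBoundary_le_three A hu.le
  · refine ⟨i, a, hu_eq.trans (funext fun x => ?_)⟩
    by_cases hx : x ∈ pairsContaining i <;> simp [signVector, hA, hx]
  · refine ⟨i, -a, hu_eq.trans (funext fun x => ?_)⟩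
    by_cases hx : x ∈ pairsContaining i <;> simp [signVector, hA, hx]

lemma eq_smul_indicator {u : PetersenVertex → F} {a : F} {v : PetersenVertex}
    (hsq : ∀ x ≠ v, u x ^ 2 = a ^ 2)
    (hv : ↑(Petersen.edgeBoundary {v}) ⊆ edgeSupport Petersen u)
    (hu : (edgeSupport Petersen u).ncard = 3) :
    u = u v • fun x => if x = v then 1 else 0 := by
  classical
  have hT : edgeSupport Petersen u = ↑(Petersen.edgeBoundary {v}) :=
    (Set.eq_of_subset_of_ncard_le hv
      (by rw [hu, Set.ncard_coe_finset, card_edgeBoundary_singleton])).symm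
  have ha : a = 0 := by
    by_contra ha
    set A := univ.filter fun x => u x = a
    have huA : ∀ x ≠ v, u x = if x ∈ A then a else -a := fun x hx => by
      simpa [A] using eq_ite_neg_of_sq_eq_sq (hsq x hx)
    apply not_sdiff_edgeBoundary_subset_edgeBoundary_singleton A v
    intro e he
    rw [← mem_coe, ← SimpleGraph.edgeSupport_sign ha] at he
    induction e using Sym2.ind with
    | _ x y =>
      obtain ⟨hxy, hval⟩ := he
      rw [SimpleGraph.mem_edgeSet] at hxy
      by_contra hxyv
      have hx : x ≠ v := by
        rintro rfl
        exact hxyv (SimpleGraph.mk_mem_edgeBoundary.mpr ⟨hxy, by simp [hxy.ne.symm]⟩)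
      have hy : y ≠ v := by
        rintro rfl
        exact hxyv (SimpleGraph.mk_mem_edgeBoundary.mpr ⟨hxy, by simp [hxy.ne]⟩)
      have hsupp : s(x, y) ∈ edgeSupport Petersen u :=
        ⟨hxy, by rwa [edgeVal_mk, huA x hx, huA y hy]⟩
      rw [hT] at hsupp
      exact hxyv hsupp
  funext x
  by_cases hx : x = v
  · simp [hx]
  · simpa [hx, ha] using hsq x hx

theorem exists_eq_smul_weightThreeVector {u : PetersenVertex → F}
    (hu : (edgeSupport Petersen u).ncard = 3) : ∃ s, ∃ c : F, u = c • weightThreeVector s := by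
  classical
  by_cases hbig : ∃ r, 9 ≤ #(univ.filter fun x => u x ^ 2 = u r ^ 2)
  · obtain ⟨r, hr⟩ := hbig
    set S := univ.filter fun x => u x ^ 2 = u r ^ 2
    have hSc : #Sᶜ ≤ 1 := by
      rw [card_compl, ← Nat.card_eq_fintype_card, natCard_vertex]
      omega
    rcases Nat.le_one_iff_eq_zero_or_eq_one.mp hSc with hS | hS
    · rw [card_eq_zero, compl_eq_empty_iff] at hS
      have hsq : ∀ x, u x ^ 2 = u r ^ 2 := fun x => by
        have hx : x ∈ S := hS ▸ mem_univ x
        simpa [S] using hx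
      obtain ⟨i, c, hu_eq⟩ := exists_eq_smul_signVector hsq hu
      exact ⟨.inr i, c, hu_eq⟩
    · obtain ⟨v, hSv⟩ := card_eq_one.mp hS
      rw [compl_eq_comm] at hSv
      have hsq : ∀ x ≠ v, u x ^ 2 = u r ^ 2 := fun x hx => by
        have hx : x ∈ S := hSv ▸ mem_compl.mpr (mt mem_singleton.mp hx)
        simpa [S] using hx
      have hv : ↑(Petersen.edgeBoundary {v}) ⊆ edgeSupport Petersen u := by
        rw [← SimpleGraph.edgeBoundary_compl, hSv]
        exact SimpleGraph.edgeBoundary_filter_sq_eq_subset_edgeSupport u _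
      exact ⟨.inl v, u v, eq_smul_indicator hsq hv hu⟩
  · simp only [not_exists, not_le] at hbig
    have hinj : Function.Injective fun x => u x ^ 2 := fun x y hxy => by
      have hle := (card_filter_sq_eq_le_one_or_nine_le hu (u y ^ 2)).resolve_right (hbig y).not_ge
      exact card_le_one.mp hle x (by simp [hxy]) y (by simp)
    rw [edgeSupport_eq_edgeSet _ hinj, ← SimpleGraph.coe_edgeFinset, Set.ncard_coe_finset,
      card_edgeFinset] at hu
    norm_num at hu

lemma edgeSupport_weightThreeVector (s : PetersenVertex ⊕ Fin 5) :
    edgeSupport Petersen (weightThreeVector s : PetersenVertex → F) = ↑(weightThreeSupport s) := by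
  cases s with
  | inl v => exact SimpleGraph.edgeSupport_indicator v
  | inr i => exact SimpleGraph.edgeSupport_sign one_ne_zero (pairsContaining i)

lemma ncard_edgeSupport_weightThreeVector (s : PetersenVertex ⊕ Fin 5) :
    (edgeSupport Petersen (weightThreeVector s : PetersenVertex → F)).ncard = 3 := by
  rw [edgeSupport_weightThreeVector, Set.ncard_coe_finset]
  cases s with
  | inl v => exact card_edgeBoundary_singleton v
  | inr i => exact card_sdiff_edgeBoundary_pairsContaining i

lemma span_weightThreeVector_injective :
    Function.Injective fun s => Submodule.span F {(weightThreeVector s : PetersenVertex → F)} :=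
  fun s t h => weightThreeSupport_injective <| coe_injective <| by
    rw [← edgeSupport_weightThreeVector (F := F), ← edgeSupport_weightThreeVector (F := F)]
    exact edgeSupport_eq_of_span_eq _ h

lemma setOf_ncard_edgeSupport_eq_three :
    {W | ∃ u : PetersenVertex → F, W = Submodule.span F {u} ∧
      (edgeSupport Petersen u).ncard = 3} =
      Set.range fun s => Submodule.span F {(weightThreeVector s : PetersenVertex → F)} := by
  ext W
  constructor
  · rintro ⟨u, rfl, hu⟩
    obtain ⟨s, c, rfl⟩ := exists_eq_smul_weightThreeVector hu
    have hc : c ≠ 0 := by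
      rintro rfl
      simp [edgeSupport_zero] at hu
    exact ⟨s, (Submodule.span_singleton_smul_eq (isUnit_iff_ne_zero.mpr hc) _).symm⟩
  · rintro ⟨s, rfl⟩
    exact ⟨_, rfl, ncard_edgeSupport_weightThreeVector s⟩

end Petersen

theorem petersen_fifteen_weight_three_spans
    {F : Type*} [Field F] [CharZero F] :
    letI S : Set (Submodule F (PetersenVertex → F)) :=
      {W | ∃ u : PetersenVertex → F, W = Submodule.span F {u} ∧
        {e : Sym2 PetersenVertex | e ∈ Petersen.edgeSet ∧ edgeVal u e ≠ 0}.ncard = 3}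
    letI vertexSpan : PetersenVertex → Submodule F (PetersenVertex → F) :=
      fun v => Submodule.span F {fun x => if x = v then (1 : F) else 0}
    S.ncard = 15 ∧
      (∀ v : PetersenVertex, vertexSpan v ∈ S) ∧
      (Set.range vertexSpan).ncard = 10 ∧
      (S \ Set.range vertexSpan).ncard = 5 := by
  set f := fun s => Submodule.span F {(Petersen.weightThreeVector s : PetersenVertex → F)}
  have hf : f.Injective := Petersen.span_weightThreeVector_injective
  have hvertex : (Set.range fun v => Submodule.span F {fun x => if x = v then (1 : F) else 0}) =
      f '' Set.range Sum.inl := Set.range_comp f Sum.inl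
  have hS := Petersen.setOf_ncard_edgeSupport_eq_three (F := F)
  unfold edgeSupport at hS
  rw [hS, hvertex]
  refine ⟨?_, fun v => ⟨.inl v, rfl⟩, ?_, ?_⟩
  · rw [Set.ncard_range_of_injective hf, Nat.card_sum, Petersen.natCard_vertex, Nat.card_fin]
  · rw [Set.ncard_image_of_injective _ hf, Set.ncard_range_of_injective Sum.inl_injective,
      Petersen.natCard_vertex]
  · rw [← Set.image_univ, ← Set.image_sdiff hf, ← Set.compl_eq_univ_sdiff,
      Set.compl_range_inl, Set.ncard_image_of_injective _ hf,
      Set.ncard_range_of_injective Sum.inr_injective, Nat.card_fin]
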